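/- Let G be the least function from pairs of subsets of S₁ × S₂ to subsets of S₁ × S₂, monotone in each argument, satisfying G X Y = (X ∩ Y) ∪ ⋃_{a ∈ Act} G (⟨a⟩₁X) ([a]₂Y) for all X, Y ⊆ S₁ × S₂. Then for all P ∈ S₁ and Q ∈ S₂: (P,Q) ∈ ⋃_{A ⊆ Act} G {(p,q) | I(p) ∩ A = ∅} {(p,q) | I(q) ∩ A ≠ ∅} if and only if there exists a failure pair ⟨t,A⟩ ∈ F(P) with ⟨t,A⟩ ∉ F(Q). -/
import Mathlib


/-- The diamond modality in the first component:
`⟨a⟩₁X = {(p,q) | ∃ p', p →₁^a p' ∧ (p',q) ∈ X}`. -/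
def dia1 {S₁ S₂ Act : Type*} (tr1 : S₁ → Act → S₁ → Prop) (a : Act)
    (X : Set (S₁ × S₂)) : Set (S₁ × S₂) :=
  {pq | ∃ p', tr1 pq.1 a p' ∧ (p', pq.2) ∈ X}

/-- The box modality in the second component:
`[a]₂Y = {(p,q) | ∀ q', q →₂^a q' → (p,q') ∈ Y}`. -/
def box2 {S₁ S₂ Act : Type*} (tr2 : S₂ → Act → S₂ → Prop) (a : Act)
    (Y : Set (S₁ × S₂)) : Set (S₁ × S₂) :=
  {pq | ∀ q', tr2 pq.2 a q' → (pq.1, q') ∈ Y}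

/-- `P →^t Q` : the process `Q` is reachable from `P` via the word `t`. -/
def Traces {S Act : Type*} (tr : S → Act → S → Prop) : S → List Act → S → Prop
  | p, [], q => p = q
  | p, a :: t, q => ∃ p', tr p a p' ∧ Traces tr p' t q

/-- `I(P)` : the set of initial actions of `P`. -/
def initials {S Act : Type*} (tr : S → Act → S → Prop) (P : S) : Set Act :=
  {a | ∃ Q, tr P a Q}

/-- `F(P)` : the set of failure pairs `⟨t,A⟩` of `P`. -/
def failurePairs {S Act : Type*} (tr : S → Act → S → Prop) (P : S) :
    Set (List Act × Set Act) :=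
  {tA | ∃ Q, Traces tr P tA.1 Q ∧ initials tr Q ∩ tA.2 = ∅}

/-- Iterated diamond modality along a word. -/
def diaL {S₁ S₂ Act : Type*} (tr1 : S₁ → Act → S₁ → Prop) :
    List Act → Set (S₁ × S₂) → Set (S₁ × S₂)
  | [], X => X
  | a :: t, X => dia1 tr1 a (diaL tr1 t X)

/-- Iterated box modality along a word. -/
def boxL {S₁ S₂ Act : Type*} (tr2 : S₂ → Act → S₂ → Prop) :
    List Act → Set (S₁ × S₂) → Set (S₁ × S₂)
  | [], Y => Y
  | a :: t, Y => box2 tr2 a (boxL tr2 t Y)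

lemma diaL_append {S₁ S₂ Act : Type*} (tr1 : S₁ → Act → S₁ → Prop)
    (t : List Act) (a : Act) (X : Set (S₁ × S₂)) :
    diaL tr1 (t ++ [a]) X = diaL tr1 t (dia1 tr1 a X) := by
  induction t with
  | nil => rfl
  | cons b s ih => simp [diaL, ih]

lemma boxL_append {S₁ S₂ Act : Type*} (tr2 : S₂ → Act → S₂ → Prop)
    (t : List Act) (a : Act) (Y : Set (S₁ × S₂)) :
    boxL tr2 (t ++ [a]) Y = boxL tr2 t (box2 tr2 a Y) := by
  induction t with
  | nil => rfl
  | cons b s ih => simp [boxL, ih]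

lemma mem_diaL {S₁ S₂ Act : Type*} (tr1 : S₁ → Act → S₁ → Prop)
    (t : List Act) (X : Set (S₁ × S₂)) (p : S₁) (q : S₂) :
    (p, q) ∈ diaL tr1 t X ↔ ∃ p', Traces tr1 p t p' ∧ (p', q) ∈ X := by
  induction t generalizing p with
  | nil =>
    simp [diaL, Traces]
  | cons a s ih =>
    constructor
    · rintro ⟨p₁, h1, h2⟩
      obtain ⟨p', ht, hx⟩ := (ih p₁).1 h2
      exact ⟨p', ⟨p₁, h1, ht⟩, hx⟩
    · rintro ⟨p', ⟨p₁, h1, ht⟩, hx⟩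
      exact ⟨p₁, h1, (ih p₁).2 ⟨p', ht, hx⟩⟩

lemma mem_boxL {S₁ S₂ Act : Type*} (tr2 : S₂ → Act → S₂ → Prop)
    (t : List Act) (Y : Set (S₁ × S₂)) (p : S₁) (q : S₂) :
    (p, q) ∈ boxL tr2 t Y ↔ ∀ q', Traces tr2 q t q' → (p, q') ∈ Y := by
  induction t generalizing q with
  | nil =>
    constructor
    · intro h q' hq'; cases hq'; exact h
    · intro h; exact h q rfl
  | cons a s ih =>
    constructor
    · rintro h q' ⟨q₁, h1, ht⟩
      exact (ih q₁).1 (h q₁ h1) q' ht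
    · intro h q₁ h1
      exact (ih q₁).2 fun q' ht => h q' ⟨q₁, h1, ht⟩

/-- The explicit least solution. -/
def Gcan {S₁ S₂ Act : Type*} (tr1 : S₁ → Act → S₁ → Prop) (tr2 : S₂ → Act → S₂ → Prop)
    (X Y : Set (S₁ × S₂)) : Set (S₁ × S₂) :=
  ⋃ t : List Act, diaL tr1 t X ∩ boxL tr2 t Y

lemma diaL_mono {S₁ S₂ Act : Type*} (tr1 : S₁ → Act → S₁ → Prop)
    (t : List Act) {X X' : Set (S₁ × S₂)} (h : X ⊆ X') :
    diaL tr1 t X ⊆ diaL tr1 t X' := by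
  induction t with
  | nil => exact h
  | cons a s ih => rintro ⟨p, q⟩ ⟨p', h1, h2⟩; exact ⟨p', h1, ih h2⟩

lemma boxL_mono {S₁ S₂ Act : Type*} (tr2 : S₂ → Act → S₂ → Prop)
    (t : List Act) {Y Y' : Set (S₁ × S₂)} (h : Y ⊆ Y') :
    boxL tr2 t Y ⊆ boxL tr2 t Y' := by
  induction t with
  | nil => exact h
  | cons a s ih => rintro ⟨p, q⟩ hb q' hq'; exact ih (hb q' hq')

lemma Gcan_mono {S₁ S₂ Act : Type*} (tr1 : S₁ → Act → S₁ → Prop)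
    (tr2 : S₂ → Act → S₂ → Prop) :
    ∀ X X' Y Y' : Set (S₁ × S₂), X ⊆ X' → Y ⊆ Y' →
      Gcan tr1 tr2 X Y ⊆ Gcan tr1 tr2 X' Y' := by
  intro X X' Y Y' hX hY pq hpq
  obtain ⟨t, h1, h2⟩ := Set.mem_iUnion.1 hpq
  exact Set.mem_iUnion.2 ⟨t, diaL_mono tr1 t hX h1, boxL_mono tr2 t hY h2⟩

lemma Gcan_eq {S₁ S₂ Act : Type*} (tr1 : S₁ → Act → S₁ → Prop)
    (tr2 : S₂ → Act → S₂ → Prop) :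
    ∀ X Y : Set (S₁ × S₂), Gcan tr1 tr2 X Y =
      (X ∩ Y) ∪ ⋃ a : Act, Gcan tr1 tr2 (dia1 tr1 a X) (box2 tr2 a Y) := by
  intro X Y
  ext pq
  simp only [Gcan, Set.mem_iUnion, Set.mem_union, Set.mem_inter_iff]
  constructor
  · rintro ⟨t, h1, h2⟩
    induction t using List.reverseRecOn with
    | nil => exact Or.inl ⟨h1, h2⟩
    | append_singleton s a _ =>
      rw [diaL_append] at h1; rw [boxL_append] at h2
      exact Or.inr ⟨a, s, h1, h2⟩
  · rintro (⟨h1, h2⟩ | ⟨a, t, h1, h2⟩)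
    · exact ⟨[], h1, h2⟩
    · exact ⟨t ++ [a], by rw [diaL_append]; exact h1, by rw [boxL_append]; exact h2⟩

/-- if `G` is the least function, monotone in each argument, satisfying
`G X Y = (X ∩ Y) ∪ ⋃_{a ∈ Act} G (⟨a⟩₁X) ([a]₂Y)`, then
`(P,Q) ∈ ⋃_{A ⊆ Act} G {(p,q) | I(p) ∩ A = ∅} {(p,q) | I(q) ∩ A ≠ ∅}` iff there is a
failure pair `⟨t,A⟩ ∈ F(P)` with `⟨t,A⟩ ∉ F(Q)`. -/
theorem stmt_3 {S₁ S₂ Act : Type*} [Fintype Act]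
    (tr1 : S₁ → Act → S₁ → Prop) (tr2 : S₂ → Act → S₂ → Prop)
    (G : Set (S₁ × S₂) → Set (S₁ × S₂) → Set (S₁ × S₂))
    (hmono : ∀ X X' Y Y', X ⊆ X' → Y ⊆ Y' → G X Y ⊆ G X' Y')
    (heq : ∀ X Y, G X Y = (X ∩ Y) ∪ ⋃ a : Act, G (dia1 tr1 a X) (box2 tr2 a Y))
    (hleast : ∀ G' : Set (S₁ × S₂) → Set (S₁ × S₂) → Set (S₁ × S₂),
      (∀ X X' Y Y', X ⊆ X' → Y ⊆ Y' → G' X Y ⊆ G' X' Y') →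
      (∀ X Y, G' X Y = (X ∩ Y) ∪ ⋃ a : Act, G' (dia1 tr1 a X) (box2 tr2 a Y)) →
      ∀ X Y, G X Y ⊆ G' X Y) :
    ∀ (P : S₁) (Q : S₂),
      (P, Q) ∈ ⋃ A : Set Act, G {pq : S₁ × S₂ | initials tr1 pq.1 ∩ A = ∅}
                                {pq : S₁ × S₂ | initials tr2 pq.2 ∩ A ≠ ∅} ↔
        ∃ tA, tA ∈ failurePairs tr1 P ∧ tA ∉ failurePairs tr2 Q := by
  -- G coincides with Gcan
  have hGsub : ∀ X Y, G X Y ⊆ Gcan tr1 tr2 X Y :=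
    hleast _ (Gcan_mono tr1 tr2) (Gcan_eq tr1 tr2)
  have hsub : ∀ (t : List Act) (X Y : Set (S₁ × S₂)),
      diaL tr1 t X ∩ boxL tr2 t Y ⊆ G X Y := by
    intro t
    induction t using List.reverseRecOn with
    | nil =>
      intro X Y
      rw [heq X Y]
      exact Set.subset_union_left
    | append_singleton s a ih =>
      intro X Y pq hpq
      rw [diaL_append, boxL_append] at hpq
      have := ih (dia1 tr1 a X) (box2 tr2 a Y) hpq
      rw [heq X Y]
      exact Set.mem_union_right _ (Set.mem_iUnion.2 ⟨a, this⟩)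
  intro P Q
  constructor
  · intro h
    obtain ⟨A, hA⟩ := Set.mem_iUnion.1 h
    obtain ⟨t, h1, h2⟩ := Set.mem_iUnion.1 (hGsub _ _ hA)
    obtain ⟨p', ht, hx⟩ := (mem_diaL tr1 t _ P Q).1 h1
    refine ⟨(t, A), ⟨p', ht, hx⟩, ?_⟩
    rintro ⟨q', hq', hIq⟩
    exact ((mem_boxL tr2 t _ P Q).1 h2 q' hq') hIq
  · rintro ⟨⟨t, A⟩, ⟨p', ht, hx⟩, hnF⟩
    refine Set.mem_iUnion.2 ⟨A, hsub t _ _ ⟨?_, ?_⟩⟩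
    · exact (mem_diaL tr1 t _ P Q).2 ⟨p', ht, hx⟩
    · refine (mem_boxL tr2 t _ P Q).2 fun q' hq' hIq => hnF ⟨q', hq', hIq⟩
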